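/- arXiv:0808.1972 — 5 statements merged into one kernel-verified Lean document; each statement's English description precedes it below -/
import Mathlib

section
/- Let h : R → S be a ring homomorphism between von Neumann regular commutative rings. Then Char(S) ⊆ Char(R); and if h is injective, then Char(S) = Char(R). -/
/-- `ringCharSet R` is the set of `p` in `{0} ∪ {primes}` such that there is a ring
homomorphism from `R` to some field of characteristic `p`. -/
def ringCharSet (R : Type) [CommRing R] : Set ℕ :=
  {p | (p = 0 ∨ p.Prime) ∧
    ∃ (F : Type) (_ : Field F), CharP F p ∧ Nonempty (R →+* F)}

lemma mem_ringCharSet_of_prime {T : Type} [CommRing T] {p : ℕ} (hp : p.Prime)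
    (h : ¬ IsUnit ((p : ℕ) : T)) : p ∈ ringCharSet T := by
  have hnt : Nontrivial T := by
    by_contra hs
    rw [not_nontrivial_iff_subsingleton] at hs
    exact h (isUnit_of_subsingleton _)
  obtain ⟨m, hm, hle⟩ := Ideal.exists_le_maximal (Ideal.span {((p : ℕ) : T)})
    (by rwa [Ne, Ideal.span_singleton_eq_top])
  letI : Field (T ⧸ m) := Ideal.Quotient.field m
  have hcast : ((p : ℕ) : T ⧸ m) = 0 := by
    have : (Ideal.Quotient.mk m) ((p : ℕ) : T) = 0 :=
      Ideal.Quotient.eq_zero_iff_mem.mpr (hle (Ideal.subset_span rfl))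
    simpa using this
  have hchar : CharP (T ⧸ m) p := (CharP.charP_iff_prime_eq_zero hp).mpr hcast
  exact ⟨Or.inr hp, T ⧸ m, inferInstance, hchar, ⟨Ideal.Quotient.mk m⟩⟩

lemma mem_ringCharSet_of_zero {T : Type} [CommRing T]
    (h : ∀ n : ℕ, 0 < n → (n : T) ≠ 0) : 0 ∈ ringCharSet T := by
  set M : Submonoid T :=
    { carrier := {x | ∃ n : ℕ, 0 < n ∧ (n : T) = x}
      one_mem' := ⟨1, one_pos, by simp⟩
      mul_mem' := by
        rintro a b ⟨n, hn, rfl⟩ ⟨m, hm, rfl⟩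
        exact ⟨n * m, Nat.mul_pos hn hm, by push_cast; ring⟩ } with hM
  have hdisj : Disjoint ((⊥ : Ideal T) : Set T) (M : Set T) := by
    rw [Set.disjoint_left]
    rintro x hx ⟨n, hn, rfl⟩
    exact h n hn (by simpa using hx)
  obtain ⟨P, hP, -, hPd⟩ := Ideal.exists_le_prime_disjoint ⊥ M hdisj
  haveI := hP
  let F := FractionRing (T ⧸ P)
  have hcharF : CharP F 0 := by
    constructor
    intro n
    simp only [zero_dvd_iff]
    constructor
    · intro hn
      by_contra hne
      have hmem : ((n : ℕ) : T) ∈ (M : Set T) := ⟨n, Nat.pos_of_ne_zero hne, rfl⟩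
      have hq : ((n : ℕ) : T ⧸ P) ≠ 0 := by
        intro h0
        have : ((n : ℕ) : T) ∈ P := by
          rw [← Ideal.Quotient.eq_zero_iff_mem]; simpa using h0
        exact Set.disjoint_left.mp hPd this hmem
      apply hq
      have hinj := IsFractionRing.injective (T ⧸ P) F
      apply hinj
      rw [map_natCast, map_zero, hn]
    · rintro rfl; simp
  exact ⟨Or.inl rfl, F, inferInstance, hcharF,
    ⟨(algebraMap (T ⧸ P) F).comp (Ideal.Quotient.mk P)⟩⟩

/-- If `h : R → S` is a ring homomorphism between von Neumann regular commutative rings, then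
`Char S ⊆ Char R`, with equality when `h` is injective. -/
theorem charSet_antitone {R S : Type} [CommRing R] [CommRing S]
    (hregR : ∀ x : R, ∃ y : R, x ^ 2 * y = x ∧ y ^ 2 * x = y)
    (hregS : ∀ x : S, ∃ y : S, x ^ 2 * y = x ∧ y ^ 2 * x = y)
    (h : R →+* S) :
    ringCharSet S ⊆ ringCharSet R ∧
      (Function.Injective h → ringCharSet S = ringCharSet R) := by
  have hsub : ringCharSet S ⊆ ringCharSet R := by
    rintro p ⟨hp0, F, hF, hchar, ⟨g⟩⟩
    exact ⟨hp0, F, hF, hchar, ⟨g.comp h⟩⟩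
  refine ⟨hsub, fun hinj => Set.Subset.antisymm hsub ?_⟩
  rintro p ⟨hp0, F, hF, hchar, ⟨g⟩⟩
  rcases hp0 with rfl | hp
  · -- characteristic zero case
    apply mem_ringCharSet_of_zero
    intro n hn hzero
    have hR : ((n : ℕ) : R) ≠ 0 := by
      intro h0
      have : ((n : ℕ) : F) = 0 := by rw [← map_natCast g, h0, map_zero]
      rw [CharP.cast_eq_zero_iff F 0 n, zero_dvd_iff] at this
      omega
    apply hR
    apply hinj
    rw [map_natCast, map_zero, hzero]
  · -- prime characteristic case
    have hFnt : Nontrivial F := inferInstance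
    have hcastF : ((p : ℕ) : F) = 0 := CharP.cast_eq_zero F p
    -- (p : R) is not a unit
    have hnotunit : ¬ IsUnit ((p : ℕ) : R) := by
      intro hu
      have : IsUnit ((p : ℕ) : F) := by
        rw [← map_natCast g]; exact hu.map g
      rw [hcastF] at this
      exact this.ne_zero rfl
    -- use regularity of R to produce a nonzero annihilator of (p : R)
    obtain ⟨y, hy1, _⟩ := hregR ((p : ℕ) : R)
    set z : R := 1 - ((p : ℕ) : R) * y with hz
    have hz0 : ((p : ℕ) : R) * z = 0 := by
      rw [hz]; linear_combination -hy1
    have hzne : z ≠ 0 := by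
      intro h0
      apply hnotunit
      have : ((p : ℕ) : R) * y = 1 := by
        rw [hz] at h0; linear_combination -h0
      exact isUnit_iff_exists_inv.mpr ⟨y, this⟩
    have hSz : ((p : ℕ) : S) * h z = 0 := by
      rw [← map_natCast h, ← map_mul, hz0, map_zero]
    have hSzne : h z ≠ 0 := by
      intro h0
      exact hzne (hinj (by rw [h0, map_zero]))
    apply mem_ringCharSet_of_prime hp
    intro hu
    rcases hu with ⟨u, hu⟩
    apply hSzne
    calc h z = (↑u⁻¹ * u) * h z := by simp
    _ = ↑u⁻¹ * (((p:ℕ):S) * h z) := by rw [hu]; ring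
    _ = 0 := by rw [hSz, mul_zero]
end

section
/- Let R be a von Neumann regular commutative ring in which n·1 ≠ 0 for every positive integer n. Then there exists a ring homomorphism from R to some field of characteristic 0; that is, 0 ∈ Char(R). -/
/-- A von Neumann regular commutative ring in which `n·1 ≠ 0` for every positive integer `n`
admits a ring homomorphism to a field of characteristic `0`. -/
theorem zero_mem_charSet {R : Type} [CommRing R]
    (hreg : ∀ x : R, ∃ y : R, x ^ 2 * y = x ∧ y ^ 2 * x = y)
    (h : ∀ n : ℕ, 0 < n → (n : R) ≠ 0) :
    0 ∈ ringCharSet R := by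
  -- the multiplicative set of positive natural casts
  set S : Submonoid R :=
    { carrier := {x | ∃ n : ℕ, 0 < n ∧ (n : R) = x}
      one_mem' := ⟨1, one_pos, by simp⟩
      mul_mem' := by
        rintro a b ⟨n, hn, rfl⟩ ⟨m, hm, rfl⟩
        exact ⟨n * m, Nat.mul_pos hn hm, by push_cast; ring⟩ } with hS
  have hdisj : Disjoint ((⊥ : Ideal R) : Set R) (S : Set R) := by
    rw [Set.disjoint_left]
    rintro x hx ⟨n, hn, rfl⟩
    exact h n hn (by simpa using hx)
  obtain ⟨P, hP, -, hPdisj⟩ := Ideal.exists_le_prime_disjoint (⊥ : Ideal R) S hdisj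
  -- the quotient is a field
  have hfield : IsField (R ⧸ P) := by
    constructor
    · exact ⟨0, 1, Ideal.Quotient.zero_ne_one_iff.mpr hP.ne_top⟩
    · exact mul_comm
    · intro a ha
      obtain ⟨x, rfl⟩ := Ideal.Quotient.mk_surjective a
      obtain ⟨y, hy, -⟩ := hreg x
      refine ⟨Ideal.Quotient.mk P y, ?_⟩
      have hx : x ∉ P := fun hx => ha (Ideal.Quotient.eq_zero_iff_mem.mpr hx)
      have : x * (x * y - 1) ∈ P := by
        have : x * (x * y - 1) = 0 := by rw [mul_sub, ← mul_assoc, ← sq, hy]; ring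
        rw [this]; exact P.zero_mem
      have hxy : x * y - 1 ∈ P := ((hP.mem_or_mem this).resolve_left hx)
      have : Ideal.Quotient.mk P (x * y - 1) = 0 := Ideal.Quotient.eq_zero_iff_mem.mpr hxy
      rw [map_sub, map_mul, sub_eq_zero] at this
      simpa using this
  letI : Field (R ⧸ P) := hfield.toField
  have hchar : CharZero (R ⧸ P) := by
    refine charZero_of_inj_zero fun n hn => ?_
    by_contra hn0
    have : (n : R) ∈ P := by
      rwa [← map_natCast (Ideal.Quotient.mk P) n, Ideal.Quotient.eq_zero_iff_mem] at hn
    exact Set.disjoint_left.mp hPdisj this ⟨n, Nat.pos_of_ne_zero hn0, rfl⟩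
  exact ⟨Or.inl rfl, R ⧸ P, inferInstance, CharP.ofCharZero _, ⟨Ideal.Quotient.mk P⟩⟩
end

section
/- Let R be a finitely presentable object of the category Reg of von Neumann regular commutative rings. Then Char(R) ⊆ {0} ∪ {prime numbers} is either a finite set not containing 0, or a cofinite set containing 0. -/
open CategoryTheory CategoryTheory.Limits

/-- The category of von Neumann regular commutative rings, as a full subcategory of the
category of commutative rings. -/
def RegCat : Type 1 :=
  CategoryTheory.ObjectProperty.FullSubcategory
    (fun R : CommRingCat => ∀ x : R, ∃ y : R, x ^ 2 * y = x ∧ y ^ 2 * x = y)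

instance : Category RegCat :=
  CategoryTheory.ObjectProperty.FullSubcategory.category _

/-- An object `R` of `Reg` is finitely presentable if `Hom(R, -)` preserves filtered
colimits. -/
def IsFinitelyPresentable (R : RegCat) : Prop :=
  ∀ (J : Type) (_ : SmallCategory J) (_ : IsFiltered J),
    Nonempty (PreservesColimitsOfShape J (coyoneda.obj (Opposite.op R)))

open Cardinal



section Ultra
variable {ι : Type} (U : Ultrafilter ι) (L : ι → Type) [∀ i, Field (L i)]

/-- The maximal ideal of a product of fields determined by an ultrafilter. -/
def uIdeal : Ideal (∀ i, L i) where
  carrier := {x | {i | x i = 0} ∈ U}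
  add_mem' := by
    intro a b ha hb
    have := Filter.inter_mem (ha : _ ∈ (U : Filter ι)) hb
    refine Filter.mem_of_superset this ?_
    rintro i ⟨h1, h2⟩
    simp only [Set.mem_setOf_eq] at *
    simp [h1, h2]
  zero_mem' := by
    have h : {i | (0 : ∀ i, L i) i = 0} = Set.univ := by ext i; simp
    show {i | (0 : ∀ i, L i) i = 0} ∈ U
    rw [h]
    exact Filter.univ_mem
  smul_mem' := by
    intro c x hx
    refine Filter.mem_of_superset (hx : _ ∈ (U : Filter ι)) ?_
    intro i h
    simp only [Set.mem_setOf_eq] at *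
    simp [h]

theorem mem_uIdeal {x : ∀ i, L i} : x ∈ uIdeal U L ↔ {i | x i = 0} ∈ U := Iff.rfl

theorem uIdeal_isMaximal : (uIdeal U L).IsMaximal := by
  rw [Ideal.isMaximal_iff]
  constructor
  · intro h
    rw [mem_uIdeal] at h
    have : {i | (1 : ∀ i, L i) i = 0} = (∅ : Set ι) := by
      ext i; simp
    rw [this] at h
    exact (Filter.empty_notMem (U : Filter ι)) h
  · intro J x hIJ hxI hxJ
    set y : ∀ i, L i := fun i => (x i)⁻¹ with hy
    have h1 : (1 : ∀ i, L i) - x * y ∈ uIdeal U L := by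
      rw [mem_uIdeal]
      have hc : {i | x i = 0}ᶜ ∈ U := (Ultrafilter.compl_mem_iff_notMem).2 hxI
      refine Filter.mem_of_superset hc ?_
      intro i h
      simp only [Set.mem_compl_iff, Set.mem_setOf_eq] at *
      simp [hy, mul_inv_cancel₀ h]
    have : (1 : ∀ i, L i) = x * y + ((1 : ∀ i, L i) - x * y) := by ring
    rw [this]
    exact J.add_mem (J.mul_mem_right y hxJ) (hIJ h1)

/-- The ultraproduct of a family of fields. -/
abbrev UProd : Type := (∀ i, L i) ⧸ uIdeal U L

noncomputable instance : Field (UProd U L) :=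
  haveI := uIdeal_isMaximal U L
  Ideal.Quotient.field _

/-- Quotient map onto the ultraproduct. -/
abbrev uMk : (∀ i, L i) →+* UProd U L := Ideal.Quotient.mk _

theorem uMk_surjective : Function.Surjective (uMk U L) := Ideal.Quotient.mk_surjective

theorem uMk_eq_zero_iff {x : ∀ i, L i} : uMk U L x = 0 ↔ {i | x i = 0} ∈ U :=
  Ideal.Quotient.eq_zero_iff_mem

theorem uMk_eq_iff {x y : ∀ i, L i} : uMk U L x = uMk U L y ↔ {i | x i = y i} ∈ U := by
  rw [show uMk U L = Ideal.Quotient.mk (uIdeal U L) from rfl, Ideal.Quotient.eq]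
  rw [show x - y ∈ uIdeal U L ↔ _ from Iff.rfl, mem_uIdeal]
  constructor <;> (intro h; refine Filter.mem_of_superset h ?_ ; intro i hi) <;>
    simp only [Set.mem_setOf_eq, Pi.sub_apply] at * <;> [exact sub_eq_zero.1 hi; simp [hi]]

theorem uProd_charP_zero (c : ι → ℕ) (hc : ∀ i, CharP (L i) (c i))
    (h : ∀ n : ℕ, n ≠ 0 → {i | c i ∣ n} ∉ U) : CharP (UProd U L) 0 := by
  constructor
  intro a
  rw [zero_dvd_iff]
  have key : (a : UProd U L) = uMk U L (a : ∀ i, L i) := (map_natCast (uMk U L) a).symm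
  rw [key, uMk_eq_zero_iff]
  have hset : {i | ((a : ∀ i, L i)) i = 0} = {i | c i ∣ a} := by
    ext i
    haveI := hc i
    simp only [Set.mem_setOf_eq, Pi.natCast_apply]
    exact CharP.cast_eq_zero_iff (L i) (c i) a
  rw [hset]
  constructor
  · intro hmem
    by_contra ha
    exact h a ha hmem
  · rintro rfl
    have : {i | c i ∣ 0} = Set.univ := by ext i; simp
    rw [this]; exact Filter.univ_mem

theorem uProd_isAlgClosed [∀ i, IsAlgClosed (L i)] : IsAlgClosed (UProd U L) := by
  apply IsAlgClosed.of_exists_root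
  intro f hmonic hirr
  set n := f.natDegree with hn
  have hnpos : 0 < n := hirr.natDegree_pos
  -- lift the coefficients
  have hlift : ∀ j : ℕ, ∃ x : ∀ i, L i, uMk U L x = f.coeff j :=
    fun j => uMk_surjective U L (f.coeff j)
  choose x hx using hlift
  -- per-coordinate polynomials
  set g : ∀ i, Polynomial (L i) := fun i =>
    Polynomial.X ^ n + ∑ j ∈ Finset.range n, Polynomial.C (x j i) * Polynomial.X ^ j with hg
  have hgdeg : ∀ i, (g i).degree ≠ 0 := by
    intro i
    have hlt : (∑ j ∈ Finset.range n, Polynomial.C (x j i) * Polynomial.X ^ j).degree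
        < (Polynomial.X ^ n : Polynomial (L i)).degree := by
      rw [Polynomial.degree_X_pow]
      refine (Polynomial.degree_sum_le _ _).trans_lt ?_
      refine (Finset.sup_lt_iff (WithBot.bot_lt_coe n)).2 ?_
      intro j hj
      calc (Polynomial.C (x j i) * Polynomial.X ^ j).degree ≤ (j : WithBot ℕ) :=
            Polynomial.degree_C_mul_X_pow_le j (x j i)
        _ < (n : WithBot ℕ) := by exact_mod_cast Finset.mem_range.1 hj
    have hdeg : (g i).degree = (n : WithBot ℕ) := by
      rw [hg]
      rw [Polynomial.degree_add_eq_left_of_degree_lt hlt, Polynomial.degree_X_pow]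
    rw [hdeg]
    exact_mod_cast hnpos.ne'
  choose r hr using fun i => IsAlgClosed.exists_root (g i) (hgdeg i)
  refine ⟨uMk U L r, ?_⟩
  have hsum : (∑ j ∈ Finset.range n, x j * r ^ j) + r ^ n = 0 := by
    funext i
    have hri := hr i
    simp only [Polynomial.IsRoot, hg, Polynomial.eval_add, Polynomial.eval_pow,
      Polynomial.eval_X, Polynomial.eval_finset_sum, Polynomial.eval_mul,
      Polynomial.eval_C] at hri
    simp only [Pi.add_apply, Finset.sum_apply, Pi.mul_apply, Pi.pow_apply, Pi.zero_apply]
    rw [add_comm]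
    exact hri
  have hcn : f.coeff n = 1 := hmonic.coeff_natDegree
  have hterm : ∀ j, f.coeff j * (uMk U L r) ^ j = uMk U L (x j * r ^ j) := by
    intro j
    rw [← hx j, map_mul, map_pow]
  calc f.eval (uMk U L r)
      = ∑ j ∈ Finset.range (n + 1), f.coeff j * (uMk U L r) ^ j :=
        Polynomial.eval_eq_sum_range _
    _ = (∑ j ∈ Finset.range n, f.coeff j * (uMk U L r) ^ j) + f.coeff n * (uMk U L r) ^ n :=
        Finset.sum_range_succ _ _
    _ = (∑ j ∈ Finset.range n, uMk U L (x j * r ^ j)) + uMk U L (r ^ n) := by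
        rw [hcn, one_mul, map_pow]
        congr 1
        exact Finset.sum_congr rfl fun j _ => hterm j
    _ = uMk U L ((∑ j ∈ Finset.range n, (x j * r ^ j)) + r ^ n) := by
        rw [map_add, map_sum]
    _ = 0 := by rw [hsum, map_zero]

end Ultra

section Colim
variable {ι : Type} (U : Ultrafilter ι) (L : ι → Type) [∀ i, Field (L i)]

/-- Index category: sets of the ultrafilter, ordered by reverse inclusion. -/
def UIdx : Type := {S : Set ι // S ∈ U}

variable {U} in
abbrev UIdx.carrier (S : UIdx U) : Set ι := S.1

instance : Preorder (UIdx U) where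
  le S T := T.1 ⊆ S.1
  le_refl S := subset_rfl
  le_trans S T V h1 h2 := Set.Subset.trans h2 h1

instance : Nonempty (UIdx U) := ⟨⟨Set.univ, Filter.univ_mem⟩⟩

theorem UIdx.le_def {S T : UIdx U} : S ≤ T ↔ T.1 ⊆ S.1 := Iff.rfl

instance : IsDirected (UIdx U) (· ≤ ·) :=
  ⟨fun S T => ⟨⟨S.1 ∩ T.1, Filter.inter_mem S.2 T.2⟩,
    (UIdx.le_def U).2 Set.inter_subset_left, (UIdx.le_def U).2 Set.inter_subset_right⟩⟩

theorem UIdx.subset_of_hom {S T : UIdx U} (h : S ⟶ T) : T.1 ⊆ S.1 :=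
  (UIdx.le_def U).1 (leOfHom h)

theorem pi_vnr (σ : Type) (M : σ → Type) [∀ s, CommRing (M s)]
    (h : ∀ s (x : M s), ∃ y, x ^ 2 * y = x ∧ y ^ 2 * x = y) :
    ∀ x : (CommRingCat.of (∀ s, M s)), ∃ y, x ^ 2 * y = x ∧ y ^ 2 * x = y := by
  intro x
  choose y hy1 hy2 using fun s => h s (x s)
  exact ⟨y, funext fun s => hy1 s, funext fun s => hy2 s⟩

theorem field_vnr (F : Type) [Field F] (x : F) :
    ∃ y, x ^ 2 * y = x ∧ y ^ 2 * x = y := by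
  rcases eq_or_ne x 0 with h | h
  · exact ⟨0, by simp [h]⟩
  · refine ⟨x⁻¹, ?_, ?_⟩
    · rw [pow_two, mul_assoc, mul_inv_cancel₀ h, mul_one]
    · rw [pow_two, mul_assoc, inv_mul_cancel₀ h, mul_one]

theorem field_vnr' (F : Type) [Field F] :
    ∀ x : (CommRingCat.of F), ∃ y : (CommRingCat.of F), x ^ 2 * y = x ∧ y ^ 2 * x = y :=
  field_vnr F

/-- The filtered diagram of products of fields. -/
def DF : UIdx U ⥤ RegCat where
  obj S := ⟨CommRingCat.of (∀ p : S.1, L p),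
    pi_vnr _ _ (fun s x => field_vnr _ x)⟩
  map {S T} h := ObjectProperty.homMk (CommRingCat.ofHom
    (Pi.ringHom fun (p : T.1) => Pi.evalRingHom (fun q : S.1 => L q) ⟨p.1, UIdx.subset_of_hom U h p.2⟩))
  map_id S := rfl
  map_comp f g := rfl

open Classical in
noncomputable def exti (S : UIdx U) : (∀ p : S.1, L p) → (∀ i, L i) :=
  fun x i => if h : i ∈ S.1 then x ⟨i, h⟩ else 0

theorem exti_mul (S : UIdx U) (x y : ∀ p : S.1, L p) :
    exti U L S (x * y) = exti U L S x * exti U L S y := by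
  funext i; by_cases h : i ∈ S.1 <;> simp [exti, h]

theorem exti_add (S : UIdx U) (x y : ∀ p : S.1, L p) :
    exti U L S (x + y) = exti U L S x + exti U L S y := by
  funext i; by_cases h : i ∈ S.1 <;> simp [exti, h]

theorem exti_zero (S : UIdx U) : exti U L S 0 = 0 := by
  funext i; by_cases h : i ∈ S.1 <;> simp [exti, h]

/-- The cocone maps into the ultraproduct. -/
noncomputable def ψ (S : UIdx U) : (∀ p : S.1, L p) →+* UProd U L where
  toFun x := uMk U L (exti U L S x)
  map_one' := by
    show uMk U L (exti U L S 1) = 1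
    rw [← map_one (uMk U L), uMk_eq_iff]
    refine Filter.mem_of_superset S.2 ?_
    intro i hi
    simp [exti, hi]
  map_mul' x y := by
    show uMk U L (exti U L S (x * y)) = uMk U L (exti U L S x) * uMk U L (exti U L S y)
    rw [exti_mul, map_mul]
  map_zero' := by
    show uMk U L (exti U L S 0) = 0
    rw [exti_zero, map_zero]
  map_add' x y := by
    show uMk U L (exti U L S (x + y)) = uMk U L (exti U L S x) + uMk U L (exti U L S y)
    rw [exti_add, map_add]

theorem ψ_apply (S : UIdx U) (x : ∀ p : S.1, L p) : ψ U L S x = uMk U L (exti U L S x) := rfl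

/-- Coerce a morphism of `RegCat` to a ring homomorphism. -/
def rh {X Y : RegCat} (f : X ⟶ Y) : ↥X.obj →+* ↥Y.obj := f.hom.hom

/-- The map of the diagram as a ring homomorphism. -/
def DFmap {S T : UIdx U} (h : S ⟶ T) : (∀ p : S.1, L p) →+* (∀ p : T.1, L p) :=
  rh ((DF U L).map h)

theorem DFmap_apply {S T : UIdx U} (h : S ⟶ T) (x : ∀ p : S.1, L p) (p : T.1) :
    DFmap U L h x p = x ⟨p.1, UIdx.subset_of_hom U h p.2⟩ := rfl

noncomputable def ucocone : Cocone (DF U L) where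
  pt := ⟨CommRingCat.of (UProd U L), field_vnr' _⟩
  ι :=
    { app := fun S => ObjectProperty.homMk (CommRingCat.ofHom (ψ U L S))
      naturality := by
        intro S T h
        refine InducedCategory.hom_ext (CommRingCat.hom_ext (RingHom.ext fun (x : ∀ p : S.1, L p) => ?_))
        show ψ U L T (DFmap U L h x) = ψ U L S x
        rw [ψ_apply, ψ_apply, uMk_eq_iff]
        refine Filter.mem_of_superset T.2 ?_
        intro i hi
        have hiS : i ∈ S.1 := UIdx.subset_of_hom U h hi
        show exti U L T (DFmap U L h x) i = exti U L S x i
        rw [exti, exti, dif_pos hi, dif_pos hiS, DFmap_apply] }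

def restr (S : UIdx U) : (∀ i, L i) →+* (∀ p : S.1, L p) :=
  Pi.ringHom fun p => Pi.evalRingHom L p.1

def univIdx : UIdx U := ⟨Set.univ, Filter.univ_mem⟩

def homToIdx (S : UIdx U) : univIdx U ⟶ S := homOfLE (Set.subset_univ S.1)

section
variable (s : Cocone (DF U L))

/-- The total map from the big product to the cocone point. -/
noncomputable def toHom : (∀ i, L i) →+* (s.pt.obj) :=
  (rh (s.ι.app (univIdx U))).comp (restr U L (univIdx U))

theorem cocone_nat {S T : UIdx U} (h : S ⟶ T) (y : ∀ p : S.1, L p) :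
    rh (s.ι.app S) y = rh (s.ι.app T) (DFmap U L h y) :=
  (DFunLike.congr_fun (congrArg rh (s.ι.naturality h)) y).symm

theorem toHom_ker {x : ∀ i, L i} (hx : x ∈ uIdeal U L) : toHom U L s x = 0 := by
  have hx' : {i | x i = 0} ∈ U := hx
  let S' : UIdx U := ⟨{i | x i = 0}, hx'⟩
  show rh (s.ι.app (univIdx U)) (restr U L (univIdx U) x) = 0
  rw [cocone_nat U L s (homToIdx U S')]
  have h0 : DFmap U L (homToIdx U S') (restr U L (univIdx U) x) = 0 := by
    funext p
    exact p.2
  rw [h0]; exact map_zero _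

end

noncomputable def ucoconeIsColimit : IsColimit (ucocone U L) where
  desc s := ObjectProperty.homMk (CommRingCat.ofHom
    (Ideal.Quotient.lift (uIdeal U L) (toHom U L s) (fun x hx => toHom_ker U L s hx)))
  fac s S := by
    refine InducedCategory.hom_ext (CommRingCat.hom_ext (RingHom.ext fun (x : ∀ p : S.1, L p) => ?_))
    show Ideal.Quotient.lift (uIdeal U L) (toHom U L s)
      (fun x hx => toHom_ker U L s hx) (ψ U L S x) = rh (s.ι.app S) x
    rw [ψ_apply]
    rw [show (uMk U L (exti U L S x)) = Ideal.Quotient.mk (uIdeal U L) (exti U L S x) from rfl]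
    rw [Ideal.Quotient.lift_mk]
    show rh (s.ι.app (univIdx U)) (restr U L (univIdx U) (exti U L S x)) = rh (s.ι.app S) x
    rw [cocone_nat U L s (homToIdx U S)]
    congr 1
    funext p
    show exti U L S x p.1 = x p
    rw [exti, dif_pos p.2]
  uniq s m w := by
    refine InducedCategory.hom_ext (CommRingCat.hom_ext (RingHom.ext fun k => ?_))
    obtain ⟨x, rfl⟩ := uMk_surjective U L k
    have h1 : uMk U L x = ψ U L (univIdx U) (restr U L (univIdx U) x) := by
      rw [ψ_apply]
      congr 1
      funext i
      show x i = exti U L (univIdx U) (restr U L (univIdx U) x) i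
      rw [exti, dif_pos (show i ∈ (univIdx U).1 from Set.mem_univ i)]
      rfl
    have h2 : rh m (ψ U L (univIdx U) (restr U L (univIdx U) x)) =
        rh (s.ι.app (univIdx U)) (restr U L (univIdx U) x) :=
      DFunLike.congr_fun (congrArg rh (w (univIdx U))) (restr U L (univIdx U) x)
    show rh m (uMk U L x) = Ideal.Quotient.lift (uIdeal U L) (toHom U L s)
      (fun x hx => toHom_ker U L s hx) (uMk U L x)
    rw [show (uMk U L x) = Ideal.Quotient.mk (uIdeal U L) x from rfl, Ideal.Quotient.lift_mk]
    rw [show ((Ideal.Quotient.mk (uIdeal U L)) x) = uMk U L x from rfl, h1, h2]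
    rfl
end Colim

section Extract
open Opposite

theorem exists_hom_of_fp {ι : Type} (U : Ultrafilter ι) (L : ι → Type) [∀ i, Field (L i)]
    (R : RegCat) (hfp : _root_.IsFinitelyPresentable R)
    (f : ↥R.obj →+* UProd U L) : ∃ i : ι, Nonempty (↥R.obj →+* L i) := by
  obtain ⟨pres⟩ := hfp (UIdx U) inferInstance inferInstance
  haveI := pres
  have h2 : IsColimit ((coyoneda.obj (op R)).mapCocone (ucocone U L)) :=
    isColimitOfPreserves _ (ucoconeIsColimit U L)
  have fm : (coyoneda.obj (op R)).obj (ucocone U L).pt :=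
    (ObjectProperty.homMk (CommRingCat.ofHom f) : R ⟶ (ucocone U L).pt)
  obtain ⟨S, g, -⟩ := Types.jointly_surjective_of_isColimit h2 fm
  obtain ⟨i, hi⟩ := Ultrafilter.nonempty_of_mem S.2
  exact ⟨i, ⟨(Pi.evalRingHom (fun p : S.1 => L p) ⟨i, hi⟩).comp
    (rh (g : R ⟶ (DF U L).obj S))⟩⟩

end Extract

section BigAC
variable (σ : Type) (F : Type) [Field F]

/-- A big algebraically closed field over `F` with `#σ` extra transcendentals. -/
def BigAC : Type := AlgebraicClosure (FractionRing (MvPolynomial σ F))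

noncomputable instance BigAC.instField : Field (BigAC σ F) :=
  inferInstanceAs (Field (AlgebraicClosure (FractionRing (MvPolynomial σ F))))

instance BigAC.instIsAlgClosed : IsAlgClosed (BigAC σ F) :=
  inferInstanceAs (IsAlgClosed (AlgebraicClosure (FractionRing (MvPolynomial σ F))))

noncomputable instance : Algebra (FractionRing (MvPolynomial σ F)) (BigAC σ F) :=
  inferInstanceAs (Algebra (FractionRing (MvPolynomial σ F))
    (AlgebraicClosure (FractionRing (MvPolynomial σ F))))

instance : NoZeroSMulDivisors (FractionRing (MvPolynomial σ F)) (BigAC σ F) :=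
  inferInstanceAs (NoZeroSMulDivisors (FractionRing (MvPolynomial σ F))
    (AlgebraicClosure (FractionRing (MvPolynomial σ F))))

instance : Algebra.IsAlgebraic (FractionRing (MvPolynomial σ F)) (BigAC σ F) :=
  inferInstanceAs (Algebra.IsAlgebraic (FractionRing (MvPolynomial σ F))
    (AlgebraicClosure (FractionRing (MvPolynomial σ F))))

/-- The canonical embedding of `F`. -/
noncomputable def BigAC.fromBase : F →+* BigAC σ F :=
  (algebraMap (FractionRing (MvPolynomial σ F)) (AlgebraicClosure _)).comp
    ((algebraMap (MvPolynomial σ F) (FractionRing (MvPolynomial σ F))).comp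
      (MvPolynomial.C))

theorem BigAC.fromBase_injective : Function.Injective (BigAC.fromBase σ F) :=
  RingHom.injective _

instance BigAC.instCharP (p : ℕ) [CharP F p] : CharP (BigAC σ F) p :=
  charP_of_injective_ringHom (BigAC.fromBase_injective σ F) p

/-- The transcendental elements indexed by `σ`. -/
noncomputable def BigAC.gen : σ → BigAC σ F := fun s =>
  (algebraMap (FractionRing (MvPolynomial σ F)) (AlgebraicClosure _))
    ((algebraMap (MvPolynomial σ F) (FractionRing (MvPolynomial σ F)))
      (MvPolynomial.X s))

theorem BigAC.gen_injective : Function.Injective (BigAC.gen σ F) := by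
  intro s t h
  apply MvPolynomial.X_injective (R := F)
  apply IsFractionRing.injective (MvPolynomial σ F) (FractionRing (MvPolynomial σ F))
  exact RingHom.injective
    (algebraMap (FractionRing (MvPolynomial σ F)) (AlgebraicClosure _)) h

theorem BigAC.card (hσ : ℵ₀ ≤ #σ) (hF : #F ≤ #σ) : #(BigAC σ F) = #σ := by
  have hne : Nonempty σ := by
    rw [← Cardinal.mk_ne_zero_iff]
    intro h
    rw [h] at hσ
    exact (aleph0_pos.not_ge) hσ
  have h1 : #(MvPolynomial σ F) = #σ := by
    rw [MvPolynomial.cardinalMk_eq_max, max_eq_right hF, max_eq_left hσ]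
  have h2 : #(FractionRing (MvPolynomial σ F)) = #σ := by
    rw [Cardinal.mk_fractionRing, h1]
  apply le_antisymm
  · calc #(BigAC σ F) ≤ max #(FractionRing (MvPolynomial σ F)) ℵ₀ :=
        Algebra.IsAlgebraic.cardinalMk_le_max _ _
      _ = #σ := by rw [h2, max_eq_left hσ]
  · calc #σ = #(MvPolynomial σ F) := h1.symm
      _ ≤ #(BigAC σ F) := Cardinal.mk_le_of_injective (by
          exact fun a b hab => IsFractionRing.injective (MvPolynomial σ F)
            (FractionRing (MvPolynomial σ F))
            (RingHom.injective (algebraMap (FractionRing (MvPolynomial σ F))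
              (AlgebraicClosure (FractionRing (MvPolynomial σ F)))) hab))

end BigAC

section Main

theorem dvd_set_finite {P : Set ℕ} (n : ℕ) (hn : n ≠ 0) : {i : ↥P | i.1 ∣ n}.Finite := by
  have hfin : {m : ℕ | m ∣ n}.Finite :=
    (Set.finite_Iic n).subset (fun m hm => Nat.le_of_dvd (Nat.pos_of_ne_zero hn) hm)
  have heq : {i : ↥P | i.1 ∣ n} = Subtype.val ⁻¹' {m : ℕ | m ∣ n} := rfl
  rw [heq]
  exact Set.Finite.preimage (Subtype.val_injective.injOn) hfin

/-- If the characteristic set is infinite, it contains `0`. -/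
theorem zero_mem_of_infinite (R : Type) [CommRing R]
    (h : (ringCharSet R).Infinite) : 0 ∈ ringCharSet R := by
  set P : Set ℕ := ringCharSet R \ {0} with hP
  have hPinf : P.Infinite := h.diff (Set.finite_singleton 0)
  haveI : Infinite ↥P := hPinf.to_subtype
  have hmem : ∀ i : ↥P, ∃ (F : Type) (_ : Field F),
      CharP F i.1 ∧ Nonempty (R →+* F) := by
    rintro ⟨i, hi⟩
    exact hi.1.2
  choose F instF hchar hhom using hmem
  letI : ∀ i : ↥P, Field (F i) := instF
  set U : Ultrafilter ↥P := Filter.hyperfilter ↥P with hU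
  set K := UProd U F with hK
  have hcharK : CharP K 0 := by
    apply uProd_charP_zero U F (fun i => i.1) hchar
    intro n hn hmemU
    exact (Set.Finite.notMem_hyperfilter (dvd_set_finite n hn)) hmemU
  have hhomK : Nonempty (R →+* K) :=
    ⟨(uMk U F).comp (Pi.ringHom fun i => (hhom i).some)⟩
  exact ⟨Or.inl rfl, K, inferInstance, hcharK, hhomK⟩

/-- Main cofiniteness argument. -/
theorem cofinite_of_fp (R : RegCat) (hfp : _root_.IsFinitelyPresentable R)
    (h0 : 0 ∈ ringCharSet ↥R.obj)
    (hinf : ({p : ℕ | p = 0 ∨ p.Prime} \ ringCharSet ↥R.obj).Infinite) : False := by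
  classical
  obtain ⟨-, F, instF, hcharF, ⟨f⟩⟩ := id h0
  letI := instF
  haveI : CharZero F := CharP.charP_to_charZero F
  haveI : (RingHom.ker f).IsPrime := RingHom.ker_isPrime f
  set A := ↥R.obj ⧸ RingHom.ker f with hA
  haveI : CharP A 0 := RingHom.charP (RingHom.kerLift f) (RingHom.kerLift_injective f) 0
  haveI : CharZero A := CharP.charP_to_charZero A
  set F₀ := FractionRing A with hF₀def
  haveI : CharZero F₀ := charZero_of_injective_ringHom (IsFractionRing.injective A F₀)
  set μ : Cardinal := max (#↥R.obj) ℵ₀ with hμ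
  set κ : Cardinal := 2 ^ μ with hκ
  set σ : Type := κ.out with hσdef
  have hσ : #σ = κ := mk_out κ
  have hμℵ : ℵ₀ ≤ μ := le_max_right _ _
  have hμκ : μ ≤ κ := (cantor μ).le
  have hκℵ : ℵ₀ < κ := hμℵ.trans_lt (cantor μ)
  have hσℵ : ℵ₀ ≤ #σ := by rw [hσ]; exact hκℵ.le
  have hF₀ : #F₀ ≤ #σ := by
    rw [hσ]
    calc #F₀ = #A := Cardinal.mk_fractionRing A
      _ ≤ #↥R.obj := Cardinal.mk_le_of_surjective Ideal.Quotient.mk_surjective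
      _ ≤ μ := le_max_left _ _
      _ ≤ κ := hμκ
  set Ω := BigAC σ F₀ with hΩ
  haveI : CharZero Ω := charZero_of_injective_ringHom (BigAC.fromBase_injective σ F₀)
  have hΩcard : #Ω = κ := by rw [hΩ, BigAC.card σ F₀ hσℵ hF₀, hσ]
  -- the family of fields of prime characteristic
  set P := {p : ℕ | p = 0 ∨ p.Prime} \ ringCharSet ↥R.obj with hPdef
  have hprime : ∀ i : ↥P, i.1.Prime := by
    rintro ⟨i, hi, hni⟩
    rcases hi with h | h
    · exact absurd (h ▸ h0) hni
    · exact h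
  haveI : Infinite ↥P := hinf.to_subtype
  letI instZ : ∀ i : ↥P, Field (ZMod i.1) := fun i => @ZMod.instField i.1 ⟨hprime i⟩
  set L : ↥P → Type := fun i => @BigAC σ (ZMod i.1) (instZ i) with hL
  letI instL : ∀ i, Field (L i) := fun i => @BigAC.instField σ (ZMod i.1) (instZ i)
  letI instChar : ∀ i : ↥P, CharP (L i) i.1 :=
    fun i => @BigAC.instCharP σ (ZMod i.1) (instZ i) i.1 (ZMod.charP i.1)
  letI instAC : ∀ i, IsAlgClosed (L i) :=
    fun i => @BigAC.instIsAlgClosed σ (ZMod i.1) (instZ i)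
  set U : Ultrafilter ↥P := Filter.hyperfilter ↥P with hU
  set K := UProd U L with hK
  haveI hKchar : CharP K 0 := by
    apply uProd_charP_zero U L (fun i => i.1) instChar
    intro n hn hmemU
    exact (Set.Finite.notMem_hyperfilter (dvd_set_finite n hn)) hmemU
  haveI : CharZero K := CharP.charP_to_charZero K
  haveI : IsAlgClosed K := uProd_isAlgClosed U L
  have hLcard : ∀ i, #(L i) = κ := by
    intro i
    haveI : Fact (i.1.Prime) := ⟨hprime i⟩
    have hz : #(ZMod i.1) ≤ #σ := le_trans Cardinal.mk_le_aleph0 hσℵ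
    rw [hL]
    rw [BigAC.card σ (ZMod i.1) hσℵ hz, hσ]
  have hPcard : #↥P = ℵ₀ := Cardinal.mk_eq_aleph0 ↥P
  have hκpow : κ ^ (ℵ₀ : Cardinal) = κ := by
    rw [hκ, ← power_mul, Cardinal.mul_eq_max hμℵ le_rfl, max_eq_left hμℵ]
  have hKcard : #K = κ := by
    apply le_antisymm
    · calc #K ≤ #(∀ i, L i) := Cardinal.mk_le_of_surjective (uMk_surjective U L)
        _ = Cardinal.prod (fun i => #(L i)) := mk_pi L
        _ = Cardinal.prod (fun _ : ↥P => κ) := by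
            congr 1
            funext i
            rw [hLcard i]
        _ = κ ^ #↥P := prod_const' _ κ
        _ = κ ^ (ℵ₀ : Cardinal) := by rw [hPcard]
        _ = κ := hκpow
    · rw [← hσ]
      apply Cardinal.mk_le_of_injective
        (f := fun s => uMk U L (fun i => @BigAC.gen σ (ZMod i.1) (instZ i) s))
      intro s t hst
      rw [uMk_eq_iff] at hst
      obtain ⟨i, hi⟩ := Ultrafilter.nonempty_of_mem hst
      exact @BigAC.gen_injective σ (ZMod i.1) (instZ i) s t hi
  -- transfer the characteristic zero morphism
  obtain ⟨e⟩ : Nonempty (Ω ≃+* K) := by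
    apply IsAlgClosed.ringEquiv_of_equiv_of_charZero
    · rw [hΩcard]; exact hκℵ
    · exact Cardinal.eq.1 (by rw [hΩcard, hKcard])
  have g : ↥R.obj →+* K :=
    e.toRingHom.comp ((BigAC.fromBase σ F₀).comp
      ((algebraMap A F₀).comp (Ideal.Quotient.mk (RingHom.ker f))))
  obtain ⟨i, ⟨h⟩⟩ := exists_hom_of_fp U L R hfp g
  have : i.1 ∈ ringCharSet ↥R.obj := ⟨Or.inr (hprime i), L i, instL i, instChar i, ⟨h⟩⟩
  exact i.2.2 this

end Main

/-- The characteristic set of a finitely presentable von Neumann regular commutative ring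
is either a finite set of primes not containing `0`, or a cofinite subset of
`{0} ∪ {primes}` containing `0`. -/
theorem charSet_finite_or_cofinite (R : RegCat) (hfp : _root_.IsFinitelyPresentable R) :
    (ringCharSet R.obj).Finite ∧ 0 ∉ ringCharSet R.obj ∨
      ({p : ℕ | p = 0 ∨ p.Prime} \ ringCharSet R.obj).Finite ∧ 0 ∈ ringCharSet R.obj := by
  by_cases h0 : 0 ∈ ringCharSet ↥R.obj
  · right
    refine ⟨?_, h0⟩
    by_contra hinf
    exact cofinite_of_fp R hfp h0 hinf
  · left
    refine ⟨?_, h0⟩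
    by_contra hinf
    exact h0 (zero_mem_of_infinite _ hinf)
end

section
/- Let F, K₁, K₂ be finite fields and let f₁ : F → K₁ and f₂ : F → K₂ be ring homomorphisms. Then there exist a finite field L and ring homomorphisms g₁ : K₁ → L and g₂ : K₂ → L such that g₁ ∘ f₁ = g₂ ∘ f₂. (The category of finite fields satisfies the amalgamation/Ore condition.) -/
universe u v w

/-- The category of finite fields satisfies the amalgamation (Ore) condition: any two
homomorphisms out of a common finite field can be completed to a commutative square. -/
theorem finite_fields_amalgamation (F : Type u) (K₁ : Type v) (K₂ : Type w)
    [Field F] [Field K₁] [Field K₂] [Finite F] [Finite K₁] [Finite K₂]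
    (f₁ : F →+* K₁) (f₂ : F →+* K₂) :
    ∃ (L : Type (max v w)) (_ : Field L) (_ : Finite L)
      (g₁ : K₁ →+* L) (g₂ : K₂ →+* L), g₁.comp f₁ = g₂.comp f₂ := by
  -- Make K₁, K₂ into F-algebras via f₁, f₂.
  letI : Algebra F K₁ := f₁.toAlgebra
  letI : Algebra F K₂ := f₂.toAlgebra
  let Ω := AlgebraicClosure F
  -- F-algebra embeddings into the algebraic closure.
  have halg₁ : Algebra.IsAlgebraic F K₁ := Algebra.IsAlgebraic.of_finite F K₁
  have halg₂ : Algebra.IsAlgebraic F K₂ := Algebra.IsAlgebraic.of_finite F K₂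
  let e₁ : K₁ →ₐ[F] Ω := IsAlgClosed.lift (M := Ω)
  let e₂ : K₂ →ₐ[F] Ω := IsAlgClosed.lift (M := Ω)
  -- Cut down to a finite intermediate field.
  let S : Set Ω := Set.range e₁ ∪ Set.range e₂
  have hSfin : S.Finite := (Set.finite_range _).union (Set.finite_range _)
  haveI : Finite S := hSfin
  have hint : ∀ x ∈ S, IsIntegral F x := fun x _ => Algebra.IsIntegral.isIntegral x
  let M : IntermediateField F Ω := IntermediateField.adjoin F S
  haveI : FiniteDimensional F M := IntermediateField.finiteDimensional_adjoin hint
  haveI : Finite M := Module.finite_of_finite F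
  -- Corestrict the embeddings to M.
  have hsub : S ⊆ M := IntermediateField.subset_adjoin F S
  let r₁ : K₁ →+* M := (e₁ : K₁ →+* Ω).codRestrict M.toSubring
    (fun x => hsub (Set.mem_union_left _ ⟨x, rfl⟩))
  let r₂ : K₂ →+* M := (e₂ : K₂ →+* Ω).codRestrict M.toSubring
    (fun x => hsub (Set.mem_union_right _ ⟨x, rfl⟩))
  -- Transport M to the right universe.
  haveI : Fintype M := Fintype.ofFinite M
  haveI : Small.{max v w} M := small_of_injective (Fintype.equivFin M).injective
  let L : Type (max v w) := Shrink.{max v w} M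
  haveI : Finite L := Finite.of_equiv M (equivShrink M)
  let φ : L ≃+* M := Shrink.ringEquiv M
  refine ⟨L, inferInstance, inferInstance, φ.symm.toRingHom.comp r₁,
    φ.symm.toRingHom.comp r₂, ?_⟩
  ext x
  have h1 : e₁ (f₁ x) = algebraMap F Ω x := e₁.commutes x
  have h2 : e₂ (f₂ x) = algebraMap F Ω x := e₂.commutes x
  simp only [RingHom.comp_apply, RingEquiv.toRingHom_eq_coe, RingHom.coe_coe]
  have : r₁ (f₁ x) = r₂ (f₂ x) := Subtype.ext (by show e₁ (f₁ x) = e₂ (f₂ x); rw [h1, h2])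
  rw [this]
end

section
/- Let F, K₁, K₂ be fields and let f₁ : F → K₁ and f₂ : F → K₂ be ring homomorphisms. Then there exist a field L and ring homomorphisms g₁ : K₁ → L and g₂ : K₂ → L such that g₁ ∘ f₁ = g₂ ∘ f₂. (The category of fields satisfies the amalgamation/Ore condition.) -/
universe u v w

/-- The category of fields satisfies the amalgamation (Ore) condition: any two
homomorphisms out of a common field can be completed to a commutative square. -/
theorem fields_amalgamation (F : Type u) (K₁ : Type v) (K₂ : Type w)
    [Field F] [Field K₁] [Field K₂]
    (f₁ : F →+* K₁) (f₂ : F →+* K₂) :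
    ∃ (L : Type (max v w)) (_ : Field L)
      (g₁ : K₁ →+* L) (g₂ : K₂ →+* L), g₁.comp f₁ = g₂.comp f₂ := by
  letI : Algebra F K₁ := f₁.toAlgebra
  letI : Algebra F K₂ := f₂.toAlgebra
  let T := TensorProduct F K₁ K₂
  obtain ⟨m, hm⟩ := Ideal.exists_maximal T
  letI := hm
  letI : Field (T ⧸ m) := Ideal.Quotient.field m
  refine ⟨T ⧸ m, inferInstance,
    (Ideal.Quotient.mk m).comp
      (Algebra.TensorProduct.includeLeft (R := F) (S := F) (A := K₁) (B := K₂)).toRingHom,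
    (Ideal.Quotient.mk m).comp
      (Algebra.TensorProduct.includeRight (R := F) (A := K₁) (B := K₂)).toRingHom, ?_⟩
  ext x
  simp only [RingHom.comp_apply, AlgHom.toRingHom_eq_coe, RingHom.coe_coe,
    Algebra.TensorProduct.includeLeft_apply, Algebra.TensorProduct.includeRight_apply]
  congr 1
  have h1 : f₁ x = algebraMap F K₁ x := rfl
  have h2 : f₂ x = algebraMap F K₂ x := rfl
  rw [h1, h2, ← Algebra.TensorProduct.algebraMap_apply (R := F) (S := F) (A := K₁) (B := K₂) x, Algebra.TensorProduct.algebraMap_apply']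
end
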